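/- arXiv:2311.06940 — 2 statements merged into one kernel-verified Lean document; each statement's English description precedes it below -/
import Mathlib

section
/- Let u, z be smooth functions on S² and ρ̃: S² → S² a smooth map such that u = u∘ρ̃ + z, Δ(u∘ρ̃) = ((Δu)∘ρ̃)·e^z (conformal transformation rule), Δz = 2(1 - e^z), and Δu = 6(1 - c·e^u) pointwise for a constant c > 0. Then e^z = 1 identically, i.e., z = 0. -/
open Real

/-- If `u = u∘ρ̃ + z`, `Δ(u∘ρ̃) = ((Δu)∘ρ̃)·e^z`, `Δz = 2(1-e^z)` and
`Δu = 6(1 - c e^u)` with `c > 0`, then `z ≡ 0`. `Δ` is a linear operator. -/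
theorem stmt_6 {X : Type*} (lap : (X → ℝ) →ₗ[ℝ] (X → ℝ))
    (u z : X → ℝ) (ρ : X → X) (c : ℝ) (hc : 0 < c)
    (huz : u = fun x => u (ρ x) + z x)
    (hconf : lap (fun x => u (ρ x)) = fun x => lap u (ρ x) * Real.exp (z x))
    (hz : lap z = fun x => 2 * (1 - Real.exp (z x)))
    (hu : lap u = fun x => 6 * (1 - c * Real.exp (u x))) :
    ∀ x, z x = 0 := by
  have hsplit : lap u = lap (fun x => u (ρ x)) + lap z := by
    rw [← map_add]
    exact congrArg lap huz
  intro x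
  have h1 : lap u x = lap (fun x => u (ρ x)) x + lap z x := by rw [hsplit]; rfl
  rw [hu, hconf, hz] at h1
  simp only at h1
  rw [hu] at h1
  simp only at h1
  have hux : u x = u (ρ x) + z x := congrFun huz x
  have hexp : Real.exp (u x) = Real.exp (u (ρ x)) * Real.exp (z x) := by
    rw [hux, Real.exp_add]
  rw [hexp] at h1
  have h2 : Real.exp (z x) = 1 := by nlinarith [h1]
  rw [← Real.exp_zero] at h2
  exact Real.exp_injective h2
end

section
/- Hersch-type stability estimate: Let Σ be a closed Riemannian surface of genus 0, and suppose the stability inequality ∫_Σ |∇f|² - Q·f² da ≥ 0 holds for all smooth f with ∫_Σ f da = 0, where Q is a continuous function on Σ. If there exists a conformal map φ: Σ → S² of degree 1 with ∫_Σ φᵢ da = 0 for i = 1,2,3, then ∫_Σ Q da ≤ 8π. -/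
open Real MeasureTheory

/-- Hersch-type estimate: suppose the stability inequality
`∫ (|∇f|² - Q f²) ≥ 0` holds for every `f` with `∫ f = 0`, where `grad2 f`
records `|∇f|²`.  If `φ : Σ → S²` has zero mean components, `|φ|² = 1`, and
total Dirichlet energy `8π` (degree one conformal map), then `∫ Q ≤ 8π`. -/
theorem stmt_9 {X : Type*} [MeasurableSpace X] (μ : Measure X)
    (grad2 : (X → ℝ) → (X → ℝ)) (Q : X → ℝ) (hQ : Integrable Q μ)
    (hstab : ∀ f : X → ℝ, ∫ x, f x ∂μ = 0 →
      0 ≤ ∫ x, (grad2 f x - Q x * (f x) ^ 2) ∂μ)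
    (φ : Fin 3 → X → ℝ)
    (hint : ∀ i, Integrable (grad2 (φ i)) μ ∧
      Integrable (fun x => Q x * (φ i x) ^ 2) μ)
    (hmean : ∀ i, ∫ x, φ i x ∂μ = 0)
    (hsph : ∀ x, ∑ i, (φ i x) ^ 2 = 1)
    (hdeg : ∑ i, ∫ x, grad2 (φ i) x ∂μ = 8 * π) :
    ∫ x, Q x ∂μ ≤ 8 * π := by
  have hsplit : ∀ i : Fin 3, ∫ x, (grad2 (φ i) x - Q x * (φ i x) ^ 2) ∂μ =
      (∫ x, grad2 (φ i) x ∂μ) - ∫ x, Q x * (φ i x) ^ 2 ∂μ := fun i =>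
    integral_sub (hint i).1 (hint i).2
  have hsum : 0 ≤ ∑ i : Fin 3, ∫ x, (grad2 (φ i) x - Q x * (φ i x) ^ 2) ∂μ :=
    Finset.sum_nonneg fun i _ => hstab (φ i) (hmean i)
  have hQsum : ∑ i : Fin 3, ∫ x, Q x * (φ i x) ^ 2 ∂μ = ∫ x, Q x ∂μ := by
    rw [← integral_finset_sum _ (fun i _ => (hint i).2)]
    congr 1
    funext x
    rw [← Finset.mul_sum, hsph x, mul_one]
  have := hsum
  simp only [hsplit] at this
  rw [Finset.sum_sub_distrib, hdeg, hQsum] at this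
  linarith
end
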